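/- arXiv:0807.2073 — 3 statements merged into one kernel-verified Lean document; each statement's English description precedes it below -/
import Mathlib

section
/- There exists a set A of nonnegative integers that is an asymptotic basis of order 2 for ℕ₀ (i.e., ℕ₀ \ (A+A) is finite) such that for every subset S ⊆ A, the set A \ S is an asymptotic basis of order 2 (i.e., ℕ₀ \ ((A\S)+(A\S)) is finite) if and only if S is finite. In particular, there exists an asymptotic basis of order 2 that contains no minimal asymptotic basis of order 2. -/
namespace EN

def mu (k : ℕ) : ℕ := 16 ^ (k + 1)
def hf (k : ℕ) : ℕ := 8 * 16 ^ k
def pa (k : ℕ) : ℕ := (Nat.unpair k).1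
def pb (k : ℕ) : ℕ := (Nat.unpair k).2

def inF (V : ℕ → Prop) (j x : ℕ) : Prop :=
  x = mu j - pb j ∨ x = mu j - pa j ∨ x = mu j ∨
    ∃ i, i < j ∧ V i ∧ 2 ≤ pa i ∧ (x = mu j - mu i + 1 ∨ x = mu j - hf i)

def membV (V : ℕ → Prop) (x : ℕ) : Prop :=
  1 ≤ x ∧ ∀ j, hf j ≤ x → x ≤ mu j → V j → inF V j x

def validN : ℕ → ℕ → Prop
  | 0, _ => False
  | f + 1, k =>
      1 ≤ pa k ∧ pa k < pb k ∧
        membV (fun j => j < k ∧ validN f j) (pa k) ∧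
        membV (fun j => j < k ∧ validN f j) (pb k)

def valid (k : ℕ) : Prop := validN (k + 1) k

-- basic arithmetic facts
lemma lt_hf (j : ℕ) : j < hf j := by
  have h : j < 16 ^ j := Nat.lt_pow_self (by norm_num)
  have h2 : 16 ^ j ≤ 8 * 16 ^ j := by omega
  unfold hf; omega

lemma inF_congr {V V' : ℕ → Prop} (j x : ℕ) (h : ∀ i, i < j → (V i ↔ V' i)) :
    inF V j x ↔ inF V' j x := by
  unfold inF
  constructor <;>
  · rintro (h1 | h1 | h1 | ⟨i, hi, hv, h2, h3⟩)
    · exact Or.inl h1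
    · exact Or.inr (Or.inl h1)
    · exact Or.inr (Or.inr (Or.inl h1))
    · exact Or.inr (Or.inr (Or.inr ⟨i, hi, by have := h i hi; tauto, h2, h3⟩))

lemma membV_congr {V V' : ℕ → Prop} (x : ℕ) (h : ∀ i, i < x → (V i ↔ V' i)) :
    membV V x ↔ membV V' x := by
  unfold membV
  have key : ∀ j, hf j ≤ x → ((V j → inF V j x) ↔ (V' j → inF V' j x)) := by
    intro j hj
    have hjx : j < x := lt_of_lt_of_le (lt_hf j) hj
    rw [h j hjx, inF_congr j x (fun i hi => h i (hi.trans hjx))]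
  constructor <;> rintro ⟨h1, h2⟩ <;> refine ⟨h1, fun j hj hx hv => ?_⟩
  · exact (key j hj).mp (fun v => h2 j hj hx v) hv
  · exact (key j hj).mpr (fun v => h2 j hj hx v) hv

lemma validN_stable : ∀ k f g, k < f → k < g → (validN f k ↔ validN g k) := by
  intro k
  induction k using Nat.strong_induction_on with
  | _ k IH =>
    intro f g hfk hgk
    obtain ⟨f', rfl⟩ : ∃ f', f = f' + 1 := ⟨f - 1, by omega⟩
    obtain ⟨g', rfl⟩ : ∃ g', g = g' + 1 := ⟨g - 1, by omega⟩
    show (_ ∧ _ ∧ _ ∧ _) ↔ (_ ∧ _ ∧ _ ∧ _)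
    have hpa : pa k ≤ k := Nat.unpair_left_le k
    have hpb : pb k ≤ k := Nat.unpair_right_le k
    have c1 : ∀ x, x ≤ k → (membV (fun j => j < k ∧ validN f' j) x ↔
        membV (fun j => j < k ∧ validN g' j) x) := by
      intro x hx
      apply membV_congr
      intro i hi
      constructor <;> rintro ⟨h1, h2⟩
      · exact ⟨h1, (IH i h1 f' g' (by omega) (by omega)).mp h2⟩
      · exact ⟨h1, (IH i h1 f' g' (by omega) (by omega)).mpr h2⟩
    rw [c1 (pa k) hpa, c1 (pb k) hpb]

def memb (x : ℕ) : Prop := membV valid x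

lemma valid_iff (k : ℕ) :
    valid k ↔ (1 ≤ pa k ∧ pa k < pb k ∧ memb (pa k) ∧ memb (pb k)) := by
  have hpa : pa k ≤ k := Nat.unpair_left_le k
  have hpb : pb k ≤ k := Nat.unpair_right_le k
  have c1 : ∀ x, x ≤ k → (membV (fun j => j < k ∧ validN k j) x ↔ membV valid x) := by
    intro x hx
    apply membV_congr
    intro i hi
    have hik : i < x → i < k := fun h => lt_of_lt_of_le h hx
    constructor
    · rintro ⟨h1, h2⟩; exact (validN_stable i k (i+1) (by omega) (by omega)).mp h2
    · intro h2; exact ⟨hik hi, (validN_stable i (i+1) k (by omega) (by omega)).mp h2⟩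
  show (_ ∧ _ ∧ _ ∧ _) ↔ _
  rw [c1 (pa k) hpa, c1 (pb k) hpb]
  exact Iff.rfl



lemma memb_iff (x : ℕ) : memb x ↔
    (1 ≤ x ∧ ∀ j, hf j ≤ x → x ≤ mu j → valid j → inF valid j x) := Iff.rfl

lemma memb_one_le {x : ℕ} (h : memb x) : 1 ≤ x := h.1

lemma pow16_mono {a b : ℕ} (h : a ≤ b) : (16:ℕ)^a ≤ 16^b :=
  Nat.pow_le_pow_right (by norm_num) h

lemma pow16_strict {a b : ℕ} (h : a < b) : (16:ℕ)^a < 16^b :=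
  Nat.pow_lt_pow_right (by norm_num) h

lemma pow16_pos (a : ℕ) : 0 < (16:ℕ)^a := Nat.pow_pos (by norm_num)

lemma zone_unique {j j' x : ℕ} (h1 : hf j ≤ x) (h2 : x ≤ mu j)
    (h3 : hf j' ≤ x) (h4 : x ≤ mu j') : j = j' := by
  unfold hf mu at *
  by_contra hne
  rcases Nat.lt_or_ge j j' with h | h
  · have e1 : (16:ℕ)^(j+1) ≤ 16^j' := pow16_mono h
    have e2 : (0:ℕ) < 16^j' := pow16_pos j'
    omega
  · have hj : j' < j := by omega
    have e1 : (16:ℕ)^(j'+1) ≤ 16^j := pow16_mono hj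
    have e2 : (0:ℕ) < 16^j := pow16_pos j
    omega

lemma hf_le_mu (k : ℕ) : hf k ≤ mu k := by
  unfold hf mu
  have := pow16_pos k
  ring_nf
  omega

lemma mu_eq_two_hf (k : ℕ) : mu k = 2 * hf k := by unfold mu hf; ring

lemma memb_of_no_zone {x : ℕ} (h1 : 1 ≤ x)
    (h : ∀ j, ¬(hf j ≤ x ∧ x ≤ mu j)) : memb x :=
  ⟨h1, fun j hj hx _ => absurd ⟨hj, hx⟩ (h j)⟩

lemma memb_small {x : ℕ} (h1 : 1 ≤ x) (h2 : x < 8) : memb x := by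
  refine memb_of_no_zone h1 (fun j => ?_)
  have := pow16_pos j
  unfold hf mu
  rintro ⟨hj, _⟩
  have : (8:ℕ) ≤ 8 * 16 ^ j := by omega
  omega

lemma memb_between {x j : ℕ} (h1 : mu j < x) (h2 : x < hf (j+1)) : memb x := by
  refine memb_of_no_zone (by have := pow16_pos (j+1); unfold mu at h1; omega) (fun j' => ?_)
  rintro ⟨hj1, hj2⟩
  rcases Nat.lt_or_ge j' (j+1) with h | h
  · have : mu j' ≤ mu j := by unfold mu; exact pow16_mono (by omega)
    omega
  · have : hf (j+1) ≤ hf j' := by unfold hf; have := pow16_mono h; omega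
    omega

lemma memb_zone_invalid {x k : ℕ} (h1 : hf k ≤ x) (h2 : x ≤ mu k)
    (h3 : ¬ valid k) : memb x := by
  refine ⟨by have := pow16_pos k; unfold hf at h1; omega, fun j hj hx hv => ?_⟩
  rw [zone_unique hj hx h1 h2] at hv
  exact absurd hv h3

lemma memb_inF {x k : ℕ} (h1 : hf k ≤ x) (h2 : x ≤ mu k) (h3 : inF valid k x) :
    memb x := by
  refine ⟨by have := pow16_pos k; unfold hf at h1; omega, fun j hj hx _ => ?_⟩
  rwa [zone_unique hj hx h1 h2]

lemma pa_le (k : ℕ) : pa k ≤ k := Nat.unpair_left_le k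
lemma pb_le (k : ℕ) : pb k ≤ k := Nat.unpair_right_le k

lemma k_lt_pow (k : ℕ) : k < 16 ^ k := Nat.lt_pow_self (by norm_num)

-- elements of F k are in A
lemma memb_mu {k : ℕ} (hv : valid k) : memb (mu k) :=
  memb_inF (hf_le_mu k) le_rfl (Or.inr (Or.inr (Or.inl rfl)))

lemma memb_mu_sub_pa {k : ℕ} (hv : valid k) : memb (mu k - pa k) := by
  have h1 : pa k ≤ k := pa_le k
  have h2 : k < 16 ^ k := k_lt_pow k
  have h3 : mu k = 16 * 16^k := by unfold mu; ring
  have h4 : hf k = 8 * 16^k := rfl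
  refine memb_inF ?_ ?_ (Or.inr (Or.inl rfl)) <;> omega

lemma memb_mu_sub_pb {k : ℕ} (hv : valid k) : memb (mu k - pb k) := by
  have h1 : pb k ≤ k := pb_le k
  have h2 : k < 16 ^ k := k_lt_pow k
  have h3 : mu k = 16 * 16^k := by unfold mu; ring
  have h4 : hf k = 8 * 16^k := rfl
  refine memb_inF ?_ ?_ (Or.inl rfl) <;> omega

lemma memb_window1 {k i : ℕ} (hik : i < k) (hvi : valid i) (hpi : 2 ≤ pa i) :
    memb (mu k - mu i + 1) := by
  have h1 : mu i ≤ 16 ^ k := pow16_mono (by omega)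
  have h2 : mu k = 16 * 16^k := by unfold mu; ring
  have h3 := pow16_pos k
  have h4 : (0:ℕ) < mu i := pow16_pos (i+1)
  have h5 : hf k = 8 * 16^k := rfl
  refine memb_inF ?_ ?_ (Or.inr (Or.inr (Or.inr ⟨i, hik, hvi, hpi, Or.inl rfl⟩))) <;> omega

lemma memb_window2 {k i : ℕ} (hik : i < k) (hvi : valid i) (hpi : 2 ≤ pa i) :
    memb (mu k - hf i) := by
  have h1 : hf i ≤ 8 * 16 ^ k := by
    have : (16:ℕ)^i ≤ 16^k := pow16_mono (by omega)
    unfold hf; omega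
  have h2 : mu k = 16 * 16^k := by unfold mu; ring
  have h3 := pow16_pos k
  have h5 : hf k = 8 * 16^k := rfl
  refine memb_inF ?_ ?_ (Or.inr (Or.inr (Or.inr ⟨i, hik, hvi, hpi, Or.inr rfl⟩))) <;> omega



-- the special numbers mu k (k valid) have exactly the two designed representations
lemma rigid_aux {k x y : ℕ} (hv : valid k) (hx : memb x) (hy : memb y)
    (hsum : x + y = mu k) (hxy : x ≤ y) :
    x = pa k ∨ x = pb k := by
  have h2 : k < 16 ^ k := k_lt_pow k
  have h3 : mu k = 16 * 16^k := by unfold mu; ring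
  have h4 : hf k = 8 * 16^k := rfl
  have hx1 : 1 ≤ x := hx.1
  have hy1 : hf k ≤ y := by omega
  have hy2 : y ≤ mu k := by omega
  have hinf : inF valid k y := hy.2 k hy1 hy2 hv
  have hpa : pa k ≤ k := pa_le k
  have hpb : pb k ≤ k := pb_le k
  rcases hinf with h | h | h | ⟨i, hik, hvi, hpi, h | h⟩
  · right; omega
  · left; omega
  · omega
  · -- y = mu k - mu i + 1, so x = mu i - 1; show ¬ memb x
    exfalso
    have hmui : mu i = 16 * 16^i := by unfold mu; ring
    have hhfi : hf i = 8 * 16^i := rfl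
    have hposi := pow16_pos i
    have hmuik : mu i ≤ 16^k := pow16_mono (by omega)
    have hxval : x = mu i - 1 := by omega
    have hz1 : hf i ≤ x := by omega
    have hz2 : x ≤ mu i := by omega
    have hinfi : inF valid i x := hx.2 i hz1 hz2 hvi
    have hpai : pa i ≤ i := pa_le i
    have hpbi : pb i ≤ i := pb_le i
    have h2i : i < 16 ^ i := k_lt_pow i
    rcases hinfi with g | g | g | ⟨i', hi', hvi', hpi', g | g⟩
    · -- pb i = 1, but pa i < pb i and 2 ≤ pa i
      have := (valid_iff i).mp hvi
      omega
    · omega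
    · omega
    · have : mu i' = 16 * 16^i' := by unfold mu; ring
      have := pow16_pos i'
      have h16 : (16:ℕ)^1 ≤ 16^(i'+1) := pow16_mono (by omega)
      norm_num at h16
      omega
    · have : hf i' = 8 * 16^i' := rfl
      have := pow16_pos i'
      have : (8:ℕ) ≤ 8 * 16^i' := by omega
      omega
  · -- y = mu k - hf i, so x = hf i; show ¬ memb x
    exfalso
    have hhfi : hf i = 8 * 16^i := rfl
    have hposi := pow16_pos i
    have hmui : mu i = 16 * 16^i := by unfold mu; ring
    have hhfk : hf i ≤ 8 * 16^k := by
      have : (16:ℕ)^i ≤ 16^k := pow16_mono (by omega)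
      omega
    have hxval : x = hf i := by omega
    have hz1 : hf i ≤ x := by omega
    have hz2 : x ≤ mu i := by omega
    have hinfi : inF valid i x := hx.2 i hz1 hz2 hvi
    have hpai : pa i ≤ i := pa_le i
    have hpbi : pb i ≤ i := pb_le i
    have h2i : i < 16 ^ i := k_lt_pow i
    rcases hinfi with g | g | g | ⟨i', hi', hvi', hpi', g | g⟩
    · omega
    · omega
    · omega
    · -- x = mu i - mu i' + 1 : parity contradiction 8*16^i = 16*16^i' - 1
      have e1 : mu i' = 16 * 16^i' := by unfold mu; ring
      have e2 := pow16_pos i'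
      have e3 : mu i' ≤ 16^i := pow16_mono (by omega)
      omega
    · -- x = mu i - hf i' with i' < i : hf i' = hf i impossible
      have e1 : hf i' = 8 * 16^i' := rfl
      have e2 : (16:ℕ)^(i'+1) ≤ 16^i := pow16_mono (by omega)
      have e3 := pow16_pos i'
      omega

lemma rigid {k x y : ℕ} (hv : valid k) (hx : memb x) (hy : memb y)
    (hsum : x + y = mu k) :
    x = pa k ∨ x = pb k ∨ y = pa k ∨ y = pb k := by
  rcases le_total x y with h | h
  · rcases rigid_aux hv hx hy hsum h with h1 | h1
    · exact Or.inl h1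
    · exact Or.inr (Or.inl h1)
  · rcases rigid_aux hv hy hx (by omega) h with h1 | h1
    · exact Or.inr (Or.inr (Or.inl h1))
    · exact Or.inr (Or.inr (Or.inr h1))



-- pick an index avoiding a finite set on two coordinates
lemma exists_good (S : Finset ℕ) (I : Finset ℕ) (f g : ℕ → ℕ)
    (hfI : Set.InjOn f I) (hgI : Set.InjOn g I) (hcard : 2 * S.card < I.card) :
    ∃ t ∈ I, f t ∉ S ∧ g t ∉ S := by
  classical
  by_contra hcon
  push_neg at hcon
  have hsub : I ⊆ (I.filter (fun t => f t ∈ S)) ∪ (I.filter (fun t => g t ∈ S)) := by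
    intro t ht
    rcases Classical.em (f t ∈ S) with h | h
    · exact Finset.mem_union_left _ (Finset.mem_filter.mpr ⟨ht, h⟩)
    · rcases hcon t ht h with h2
      exact Finset.mem_union_right _ (Finset.mem_filter.mpr ⟨ht, h2⟩)
  have c1 : (I.filter (fun t => f t ∈ S)).card ≤ S.card := by
    apply Finset.card_le_card_of_injOn f
    · intro a ha; exact (Finset.mem_filter.mp ha).2
    · intro a ha b hb hab
      exact hfI (Finset.mem_coe.mpr (Finset.mem_filter.mp ha).1)
        (Finset.mem_coe.mpr (Finset.mem_filter.mp hb).1) hab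
  have c2 : (I.filter (fun t => g t ∈ S)).card ≤ S.card := by
    apply Finset.card_le_card_of_injOn g
    · intro a ha; exact (Finset.mem_filter.mp ha).2
    · intro a ha b hb hab
      exact hgI (Finset.mem_coe.mpr (Finset.mem_filter.mp ha).1)
        (Finset.mem_coe.mpr (Finset.mem_filter.mp hb).1) hab
  have := Finset.card_le_card hsub
  have := Finset.card_union_le (I.filter (fun t => f t ∈ S)) (I.filter (fun t => g t ∈ S))
  omega

def zeta (t : ℕ) : ℕ := Nat.pair 2 (16 ^ t + 1)

lemma pa_zeta (t : ℕ) : pa (zeta t) = 2 := by unfold pa zeta; rw [Nat.unpair_pair]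
lemma pb_zeta (t : ℕ) : pb (zeta t) = 16 ^ t + 1 := by unfold pb zeta; rw [Nat.unpair_pair]

lemma zeta_eq {t : ℕ} (ht : 1 ≤ t) : zeta t = (16^t+1)*(16^t+1) + 2 := by
  have h2 : (2:ℕ) < 16^t + 1 := by
    have : (16:ℕ)^1 ≤ 16^t := pow16_mono ht
    norm_num at this; omega
  unfold zeta Nat.pair
  rw [if_pos h2]

lemma zeta_lt {t t' : ℕ} (ht : 1 ≤ t) (h : t < t') : zeta t < zeta t' := by
  rw [zeta_eq ht, zeta_eq (by omega)]
  have h1 := pow16_strict h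
  have h2 := pow16_pos t
  nlinarith [sq_nonneg ((16:ℕ)^t), sq_nonneg ((16:ℕ)^t')]

lemma zeta_ge {t : ℕ} (ht : 1 ≤ t) : 16 ^ t ≤ zeta t := by
  rw [zeta_eq ht]; nlinarith

lemma memb_pow16 {t : ℕ} (ht : 1 ≤ t) : memb (16 ^ t + 1) := by
  obtain ⟨t', rfl⟩ : ∃ t', t = t' + 1 := ⟨t - 1, by omega⟩
  apply memb_between (j := t')
  · unfold mu; omega
  · unfold hf
    have := pow16_pos (t'+1)
    have h : (16:ℕ)^(t'+1) + 1 < 8 * 16^(t'+1) := by omega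
    exact h

lemma valid_zeta {t : ℕ} (ht : 1 ≤ t) : valid (zeta t) := by
  rw [valid_iff, pa_zeta, pb_zeta]
  refine ⟨by omega, ?_, memb_small (by omega) (by omega), memb_pow16 ht⟩
  have : (16:ℕ)^1 ≤ 16^t := pow16_mono ht
  norm_num at this; omega

lemma pair_le_sq (a b : ℕ) : Nat.pair a b ≤ (a + b + 1)^2 := by
  unfold Nat.pair
  split <;> nlinarith

lemma valid_pair {s s' : ℕ} (hs : memb s) (hs' : memb s') (h : s < s') :
    valid (Nat.pair s s') := by
  rw [valid_iff]
  unfold pa pb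
  rw [Nat.unpair_pair]
  exact ⟨hs.1, h, hs, hs'⟩



lemma strict_inj {f : ℕ → ℕ} {I : Finset ℕ}
    (h : ∀ a ∈ I, ∀ b ∈ I, a < b → f a < f b) : Set.InjOn f I := by
  intro a ha b hb heq
  rcases lt_trichotomy a b with hc | hc | hc
  · exact absurd heq (by have := h a (Finset.mem_coe.mp ha) b (Finset.mem_coe.mp hb) hc; omega)
  · exact hc
  · exact absurd heq (by have := h b (Finset.mem_coe.mp hb) a (Finset.mem_coe.mp ha) hc; omega)

lemma strict_inj' {f : ℕ → ℕ} {I : Finset ℕ}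
    (h : ∀ a ∈ I, ∀ b ∈ I, a < b → f b < f a) : Set.InjOn f I := by
  intro a ha b hb heq
  rcases lt_trichotomy a b with hc | hc | hc
  · exact absurd heq (by have := h a (Finset.mem_coe.mp ha) b (Finset.mem_coe.mp hb) hc; omega)
  · exact hc
  · exact absurd heq (by have := h b (Finset.mem_coe.mp hb) a (Finset.mem_coe.mp ha) hc; omega)

def Rep (S : Finset ℕ) (n : ℕ) : Prop :=
  ∃ x y, memb x ∧ memb y ∧ x ∉ S ∧ y ∉ S ∧ x + y = n

lemma lin_le_pow16 (x : ℕ) : 16 * x ≤ 16 ^ (x+1) := by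
  have := k_lt_pow x
  have : (16:ℕ)^(x+1) = 16 * 16^x := by ring
  omega

-- mid-zone case: hf k ≤ n ≤ mu k - R where R = 4σ+9
lemma case_mid (S : Finset ℕ) (m : ℕ) (hm : ∀ s ∈ S, s ≤ m) (k n : ℕ)
    (hk1 : 1 ≤ k)
    (hbig : 4 * S.card + 9 + m < 16 ^ k)
    (h1 : hf k ≤ n) (h2 : n + (4 * S.card + 9) ≤ mu k) :
    Rep S n := by
  set σ := S.card with hσ
  have hfk : hf k = 8 * 16^k := rfl
  have hmuk : mu k = 16 * 16^k := by unfold mu; ring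
  have hkk : k - 1 + 1 = k := by omega
  have hmu1 : mu (k-1) = 16^k := by unfold mu; rw [hkk]
  set q := n / 2 with hq
  have hq2 : n = 2*q ∨ n = 2*q + 1 := by omega
  set I : Finset ℕ := Finset.Icc 0 (2*σ+1) with hI
  have hIcard : I.card = 2*σ+2 := by rw [hI, Nat.card_Icc]; omega
  have hn2 : 2*σ + 2 < q := by omega
  have hfinj : Set.InjOn (fun t => q - t) I := by
    apply strict_inj'
    intro a ha b hb hab
    simp only [hI, Finset.mem_Icc] at ha hb
    omega
  have hginj : Set.InjOn (fun t => n - (q - t)) I := by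
    apply strict_inj
    intro a ha b hb hab
    simp only [hI, Finset.mem_Icc] at ha hb
    omega
  obtain ⟨t, htI, hxS, hyS⟩ := exists_good S I _ _ hfinj hginj (by omega)
  simp only [hI, Finset.mem_Icc] at htI
  refine ⟨q - t, n - (q - t), ?_, ?_, hxS, hyS, by omega⟩
  · exact memb_between (j := k-1) (by omega) (by simp only [hkk]; omega)
  · exact memb_between (j := k-1) (by omega) (by simp only [hkk]; omega)

-- top-of-zone case: valid k, mu k - R < n < mu k
lemma case_top (S : Finset ℕ) (m : ℕ) (hm : ∀ s ∈ S, s ≤ m) (c1 c2 k n : ℕ)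
    (hc1 : m + S.card + 9 ≤ c1) (hc2 : c2 = c1 + 2*S.card + 2)
    (hv : valid k)
    (hzk : zeta c2 < k)
    (hk1 : 1 ≤ k)
    (hbig : 4 * S.card + 9 + m < 16 ^ k)
    (h1 : mu k ≤ n + (4 * S.card + 9)) (h2 : n < mu k) :
    Rep S n := by
  set σ := S.card with hσ
  set r := mu k - n with hr
  have hr1 : 1 ≤ r := by omega
  have hr2 : r ≤ 4*σ+9 := by omega
  have hmuk : mu k = 16 * 16^k := by unfold mu; ring
  set I : Finset ℕ := Finset.Icc c1 c2 with hI
  have hIcard : I.card = 2*σ+3 := by rw [hI, Nat.card_Icc]; omega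
  -- facts about zeta t for t in I
  have hzfact : ∀ t ∈ I, 1 ≤ t ∧ valid (zeta t) ∧ pa (zeta t) = 2 ∧ zeta t < k
      ∧ 16 * c1 ≤ 16 ^ (zeta t) ∧ 1 ≤ zeta t := by
    intro t ht
    simp only [hI, Finset.mem_Icc] at ht
    have ht1 : 1 ≤ t := by omega
    have hzle : zeta t ≤ zeta c2 := by
      rcases Nat.lt_or_ge t c2 with h | h
      · exact le_of_lt (zeta_lt ht1 h)
      · rw [show t = c2 by omega]
    have hzge : 16^t ≤ zeta t := zeta_ge ht1
    have ha : c1 < 16^c1 := k_lt_pow c1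
    have hb : (16:ℕ)^c1 ≤ 16^t := pow16_mono (by omega)
    have hz2 : c1 + 1 ≤ zeta t := by omega
    have hc : (16:ℕ)^(c1+1) ≤ 16^(zeta t) := pow16_mono hz2
    have hd : (16:ℕ)^(c1+1) = 16*16^c1 := by ring
    exact ⟨ht1, valid_zeta ht1, pa_zeta t, lt_of_le_of_lt hzle hzk, by omega, by omega⟩
  have hxmemb : ∀ t ∈ I, memb (hf (zeta t) - r) := by
    intro t ht
    obtain ⟨ht1, hvz, hpz, hzk', hpow, hz1⟩ := hzfact t ht
    set i := zeta t
    have hhfi : hf i = 8 * 16^i := rfl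
    have hii : i - 1 + 1 = i := by omega
    have hmui1 : mu (i-1) = 16^i := by unfold mu; rw [hii]
    have hrsmall : r < 7 * 16 ^ i := by omega
    exact memb_between (j := i-1) (by omega) (by simp only [hii]; omega)
  have hfinj : Set.InjOn (fun t => hf (zeta t) - r) I := by
    apply strict_inj
    intro a ha b hb hab
    obtain ⟨ha1, _, _, _, hpa', _⟩ := hzfact a ha
    obtain ⟨hb1, _, _, _, hpb', _⟩ := hzfact b hb
    have hz : zeta a < zeta b := zeta_lt ha1 hab
    have hlt : hf (zeta a) < hf (zeta b) := by
      unfold hf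
      have := pow16_strict hz
      omega
    have hra : r ≤ hf (zeta a) := by
      have : hf (zeta a) = 8 * 16 ^ (zeta a) := rfl
      omega
    omega
  obtain ⟨t, htI, hxS, _⟩ := exists_good S I _ _ hfinj hfinj (by omega)
  obtain ⟨ht1, hvz, hpz, hzk', hpow, hz1⟩ := hzfact t htI
  set i := zeta t
  have hhfi : hf i = 8 * 16^i := rfl
  have hik : (16:ℕ)^i ≤ 16^(k-1) := pow16_mono (by omega)
  have h16k1 : (16:ℕ)^k = 16 * 16^(k-1) := by
    rw [← pow_succ']
    congr 1
    omega
  have hymemb : memb (mu k - hf i) := memb_window2 hzk' hvz (by omega)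
  refine ⟨hf i - r, mu k - hf i, hxmemb t htI, hymemb, hxS, ?_, ?_⟩
  · intro hcon
    have := hm _ hcon
    omega
  · have h16ip : (0:ℕ) < 16^i := pow16_pos i
    omega



-- n = mu k, valid k, k large (so that not both pair elements in S)
lemma case_mu (S : Finset ℕ) (m : ℕ) (hm : ∀ s ∈ S, s ≤ m) (k : ℕ)
    (hv : valid k)
    (hk2 : (2*m+1)^2 < k)
    (hbig : m < 16 ^ k) :
    Rep S (mu k) := by
  have hvi := (valid_iff k).mp hv
  have hone : ¬ (pa k ≤ m ∧ pb k ≤ m) := by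
    rintro ⟨ha, hb⟩
    have h1 : Nat.pair (pa k) (pb k) = k := Nat.pair_unpair k
    have h2 := pair_le_sq (pa k) (pb k)
    nlinarith
  have hmuk : mu k = 16 * 16^k := by unfold mu; ring
  have hpak : pa k ≤ k := pa_le k
  have hpbk : pb k ≤ k := pb_le k
  have hkp : k < 16^k := k_lt_pow k
  rcases Classical.em (pa k ≤ m) with h | h
  · -- then pb k > m, use (pb k, mu k - pb k)
    have hbm : ¬ (pb k ≤ m) := fun hb => hone ⟨h, hb⟩
    refine ⟨pb k, mu k - pb k, hvi.2.2.2, memb_mu_sub_pb hv, ?_, ?_, by omega⟩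
    · intro hcon; exact hbm (hm _ hcon)
    · intro hcon; have := hm _ hcon; omega
  · refine ⟨pa k, mu k - pa k, hvi.2.2.1, memb_mu_sub_pa hv, ?_, ?_, by omega⟩
    · intro hcon; exact h (hm _ hcon)
    · intro hcon; have := hm _ hcon; omega

-- zone region, k invalid
lemma case_zone_invalid (S : Finset ℕ) (m c2 : ℕ) (hm : ∀ s ∈ S, s ≤ m)
    (hc2 : 1 ≤ c2) (hcard : 2 * S.card < c2) (k n : ℕ)
    (hnv : ¬ valid k)
    (hk1 : 1 ≤ k)
    (hbig : 16^c2 + m + 9 < 16 ^ k)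
    (h1 : hf k ≤ n) (h2 : n ≤ mu k) :
    Rep S n := by
  have hfk : hf k = 8 * 16^k := rfl
  have hmuk : mu k = 16 * 16^k := by unfold mu; ring
  have hkk : k - 1 + 1 = k := by omega
  have hmu1 : mu (k-1) = 16^k := by unfold mu; rw [hkk]
  set I : Finset ℕ := Finset.Icc 1 c2 with hI
  have hIcard : I.card = c2 := by rw [hI, Nat.card_Icc]; omega
  have hfinj : Set.InjOn (fun t => 16^t + 1) I := by
    apply strict_inj
    intro a ha b hb hab
    have := pow16_strict hab
    omega
  obtain ⟨t, htI, hxS, _⟩ := exists_good S I _ _ hfinj hfinj (by omega)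
  simp only [hI, Finset.mem_Icc] at htI
  have hxb : 16^t + 1 ≤ 16^c2 + 1 := by
    have := pow16_mono htI.2
    omega
  have hpk := pow16_pos k
  have hpt := pow16_pos t
  have hpc := pow16_pos c2
  refine ⟨16^t + 1, n - (16^t + 1), memb_pow16 htI.1, ?_, hxS, ?_, by omega⟩
  · rcases Nat.lt_or_ge (n - (16^t+1)) (hf k) with h | h
    · exact memb_between (j := k-1) (by omega) (by simp only [hkk]; omega)
    · exact memb_zone_invalid h (by omega) hnv
  · intro hcon
    have := hm _ hcon
    omega

-- far above zone: mu k + K2 ≤ n < hf (k+1), any validity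
lemma case_above_far (S : Finset ℕ) (m c2 : ℕ) (hm : ∀ s ∈ S, s ≤ m)
    (hc2 : 1 ≤ c2) (hcard : 2 * S.card < c2) (k n : ℕ)
    (hbig : 16^c2 + m + 9 < 16 ^ k)
    (h1 : mu k + 16^c2 + 2 ≤ n) (h2 : n < hf (k+1)) :
    Rep S n := by
  have hmuk : mu k = 16 * 16^k := by unfold mu; ring
  have hfk1 : hf (k+1) = 8 * 16^(k+1) := rfl
  set I : Finset ℕ := Finset.Icc 1 c2 with hI
  have hIcard : I.card = c2 := by rw [hI, Nat.card_Icc]; omega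
  have hfinj : Set.InjOn (fun t => 16^t + 1) I := by
    apply strict_inj
    intro a ha b hb hab
    have := pow16_strict hab
    omega
  obtain ⟨t, htI, hxS, _⟩ := exists_good S I _ _ hfinj hfinj (by omega)
  simp only [hI, Finset.mem_Icc] at htI
  have hxb : 16^t + 1 ≤ 16^c2 + 1 := by
    have := pow16_mono htI.2
    omega
  have hpk := pow16_pos k
  have hpt := pow16_pos t
  have hpc := pow16_pos c2
  refine ⟨16^t + 1, n - (16^t + 1), memb_pow16 htI.1, ?_, hxS, ?_, by omega⟩
  · exact memb_between (j := k) (by omega) (by omega)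
  · intro hcon
    have := hm _ hcon
    omega

-- just above zone, k invalid
lemma case_above_near_invalid (S : Finset ℕ) (m c2 : ℕ) (hm : ∀ s ∈ S, s ≤ m)
    (hc2 : 1 ≤ c2) (hcard : 2 * S.card < c2) (k n : ℕ)
    (hnv : ¬ valid k)
    (hk1 : 1 ≤ k)
    (hbig : 16^c2 + m + 9 < 16 ^ k)
    (h1 : mu k < n) (h2 : n < mu k + 16^c2 + 2) :
    Rep S n := by
  have hfk : hf k = 8 * 16^k := rfl
  have hmuk : mu k = 16 * 16^k := by unfold mu; ring
  have hfk1 : hf (k+1) = 8 * 16^(k+1) := rfl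
  have hp : (16:ℕ)^(k+1) = 16*16^k := by ring
  set I : Finset ℕ := Finset.Icc 1 c2 with hI
  have hIcard : I.card = c2 := by rw [hI, Nat.card_Icc]; omega
  have hfinj : Set.InjOn (fun t => 16^t + 1) I := by
    apply strict_inj
    intro a ha b hb hab
    have := pow16_strict hab
    omega
  obtain ⟨t, htI, hxS, _⟩ := exists_good S I _ _ hfinj hfinj (by omega)
  simp only [hI, Finset.mem_Icc] at htI
  have hxb : 16^t + 1 ≤ 16^c2 + 1 := by
    have := pow16_mono htI.2
    omega
  have hpk := pow16_pos k
  have hpt := pow16_pos t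
  have hpc := pow16_pos c2
  refine ⟨16^t + 1, n - (16^t + 1), memb_pow16 htI.1, ?_, hxS, ?_, by omega⟩
  · rcases Nat.lt_or_ge (mu k) (n - (16^t+1)) with h | h
    · exact memb_between (j := k) (by omega) (by omega)
    · exact memb_zone_invalid (x := n - (16^t+1)) (by omega) h hnv
  · intro hcon
    have := hm _ hcon
    omega

-- just above zone, k valid: window reps
lemma lin_le_pow16' {x : ℕ} (hx : 1 ≤ x) : 16 * x ≤ 16 ^ x := by
  obtain ⟨y, rfl⟩ : ∃ y, x = y + 1 := ⟨x - 1, by omega⟩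
  have h1 : y < 16 ^ y := k_lt_pow y
  have h2 : (16:ℕ)^(y+1) = 16 * 16^y := by ring
  omega

lemma case_above_near_valid (S : Finset ℕ) (m : ℕ) (hm : ∀ s ∈ S, s ≤ m) (c1 c2 k n : ℕ)
    (hc1 : m + S.card + 9 ≤ c1) (hc2 : c2 = c1 + 2*S.card + 2)
    (hv : valid k)
    (hzk : zeta c2 < k)
    (hk1 : 1 ≤ k)
    (hbig : 16^c2 + m + 9 < 16 ^ k)
    (h1 : mu k < n) (h2 : n < mu k + 16^c2 + 2) :
    Rep S n := by
  set σ := S.card with hσ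
  set r := n - mu k with hr
  have hpc2 := pow16_pos c2
  have hr1 : 1 ≤ r := by omega
  have hr2 : r < 16^c2 + 2 := by omega
  have hmuk : mu k = 16 * 16^k := by unfold mu; ring
  set I : Finset ℕ := Finset.Icc c1 c2 with hI
  have hIcard : I.card = 2*σ+3 := by rw [hI, Nat.card_Icc]; omega
  have hzfact : ∀ t ∈ I, 1 ≤ t ∧ valid (zeta t) ∧ pa (zeta t) = 2 ∧ zeta t < k
      ∧ 16^(c2+1) ≤ 16 ^ (zeta t) ∧ 1 ≤ zeta t := by
    intro t ht
    simp only [hI, Finset.mem_Icc] at ht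
    have ht1 : 1 ≤ t := by omega
    have hzle : zeta t ≤ zeta c2 := by
      rcases Nat.lt_or_ge t c2 with h | h
      · exact le_of_lt (zeta_lt ht1 h)
      · rw [show t = c2 by omega]
    have hzge : 16^t ≤ zeta t := zeta_ge ht1
    have hb : (16:ℕ)^c1 ≤ 16^t := pow16_mono (by omega)
    have hlin : 16 * c1 ≤ 16^c1 := lin_le_pow16' (by omega)
    have hz2 : c2 + 1 ≤ zeta t := by omega
    have hc : (16:ℕ)^(c2+1) ≤ 16^(zeta t) := pow16_mono hz2
    exact ⟨ht1, valid_zeta ht1, pa_zeta t, lt_of_le_of_lt hzle hzk, hc, by omega⟩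
  have hxmemb : ∀ t ∈ I, memb (mu (zeta t) + r - 1) := by
    intro t ht
    obtain ⟨ht1, hvz, hpz, hzk', hpow, hz1⟩ := hzfact t ht
    set i := zeta t
    have hmui : mu i = 16 * 16^i := by unfold mu; ring
    have hpi := pow16_pos i
    have hc2i : (16:ℕ)^(c2+1) = 16 * 16^c2 := by ring
    have h16i : 16 * 16^c2 ≤ 16^i := by omega
    rcases Nat.lt_or_ge r 2 with h | h
    · have : mu i + r - 1 = mu i := by omega
      rw [this]
      exact memb_mu hvz
    · have hfi1 : hf (i+1) = 8 * 16^(i+1) := rfl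
      have hpp : (16:ℕ)^(i+1) = 16 * 16^i := by ring
      have hmuii : mu i = 16^(i+1) := rfl
      exact memb_between (j := i) (by omega) (by omega)
  have hfinj : Set.InjOn (fun t => mu (zeta t) + r - 1) I := by
    apply strict_inj
    intro a ha b hb hab
    obtain ⟨ha1, _, _, _, _, _⟩ := hzfact a ha
    have hz : zeta a < zeta b := zeta_lt ha1 hab
    have hlt : mu (zeta a) < mu (zeta b) := pow16_strict (by omega)
    have := pow16_pos (zeta a + 1)
    have h0 : (0:ℕ) < mu (zeta a) := pow16_pos _
    omega
  obtain ⟨t, htI, hxS, _⟩ := exists_good S I _ _ hfinj hfinj (by omega)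
  obtain ⟨ht1, hvz, hpz, hzk', hpow, hz1⟩ := hzfact t htI
  set i := zeta t
  have hymemb : memb (mu k - mu i + 1) := memb_window1 hzk' hvz (by omega)
  have hik : mu i ≤ 16^k := by
    have : (16:ℕ)^(i+1) ≤ 16^k := pow16_mono (by omega)
    exact this
  have hpi := pow16_pos i
  have hmui0 : (0:ℕ) < mu i := pow16_pos _
  refine ⟨mu i + r - 1, mu k - mu i + 1, hxmemb t htI, hymemb, hxS, ?_, by omega⟩
  intro hcon
  have := hm _ hcon
  omega



theorem cover (S : Finset ℕ) : ∃ N, ∀ n, N ≤ n → Rep S n := by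
  classical
  set m := S.sup id with hmdef
  have hm : ∀ s ∈ S, s ≤ m := fun s hs => Finset.le_sup (f := id) hs
  set σ := S.card with hσ
  set c1 := m + σ + 9 with hc1def
  set c2 := c1 + 2*σ + 2 with hc2def
  set k0 := zeta c2 + 16^c2 + m + (2*m+1)^2 + 100 with hk0def
  refine ⟨16^(k0+2), fun n hn => ?_⟩
  have hc2pos : 1 ≤ c2 := by omega
  have hzge : 16^c2 ≤ zeta c2 := zeta_ge hc2pos
  have hc2p := pow16_pos c2
  have hlc2 : 16 * c2 ≤ 16^c2 := lin_le_pow16' hc2pos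
  -- locate n relative to the zones
  set P : ℕ → Prop := fun j => hf j ≤ n with hP
  set k := Nat.findGreatest P n with hkdef
  have hn8 : 8 ≤ n := by
    have : k0 + 2 < 16^(k0+2) := k_lt_pow (k0+2)
    omega
  have hP0 : P 0 := by
    show hf 0 ≤ n
    unfold hf
    simpa using hn8
  have hk1' : P k := Nat.findGreatest_spec (Nat.zero_le n) hP0
  have hk1 : hf k ≤ n := hk1'
  have hkn : k ≤ n := Nat.findGreatest_le n
  have hk2 : n < hf (k+1) := by
    rcases Nat.lt_or_ge n (k+1) with h | h
    · -- then k = n, but hf n > n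
      have := lt_hf k
      omega
    · by_contra hcon
      push_neg at hcon
      have hPk1 : P (k+1) := hcon
      exact Nat.findGreatest_is_greatest (P := P) (n := n) (k := k+1) (by omega) h hPk1
  have hkk0 : k0 < k := by
    by_contra hcon
    push_neg at hcon
    have h1 : (16:ℕ)^(k+2) ≤ 16^(k0+2) := pow16_mono (by omega)
    have h2 : hf (k+1) = 8 * 16^(k+1) := rfl
    have h3 : (16:ℕ)^(k+2) = 16 * 16^(k+1) := by ring
    omega
  have hk16 : k < 16^k := k_lt_pow k
  have hbig1 : 4*σ + 9 + m < 16^k := by omega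
  have hbig2 : 16^c2 + m + 9 < 16^k := by omega
  have hkpos : 1 ≤ k := by omega
  have hmuk : mu k = 16*16^k := by unfold mu; ring
  have hfk : hf k = 8*16^k := rfl
  rcases le_or_gt n (mu k) with hcase | hcase
  · rcases le_or_gt (n + (4*σ+9)) (mu k) with h | h
    · exact case_mid S m hm k n hkpos hbig1 hk1 h
    · rcases Classical.em (valid k) with hv | hv
      · rcases Classical.em (n = mu k) with he | he
        · rw [he]
          exact case_mu S m hm k hv (by omega) (by omega)
        · exact case_top S m hm c1 c2 k n (by omega) (by omega) hv (by omega) hkpos hbig1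
            (by omega) (by omega)
      · exact case_zone_invalid S m c2 hm hc2pos (by omega) k n hv hkpos hbig2 hk1 hcase
  · rcases le_or_gt (mu k + 16^c2 + 2) n with h | h
    · exact case_above_far S m c2 hm hc2pos (by omega) k n hbig2 h hk2
    · rcases Classical.em (valid k) with hv | hv
      · exact case_above_near_valid S m hm c1 c2 k n (by omega) (by omega) hv (by omega)
          hkpos hbig2 hcase h
      · exact case_above_near_invalid S m c2 hm hc2pos (by omega) k n hv hkpos hbig2 hcase h



def Aset : Set ℕ := {x | memb x}

open Pointwise in
lemma fatal {S : Set ℕ} (hS : S ⊆ Aset) (hinf : S.Infinite) :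
    {n : ℕ | n ∉ (Aset \ S) + (Aset \ S)}.Infinite := by
  obtain ⟨s1, hs1⟩ := hinf.nonempty
  have hT : (S \ Set.Iic s1).Infinite := hinf.diff (Set.finite_Iic s1)
  have hmemb1 : memb s1 := hS hs1
  have key : ∀ s' ∈ S \ Set.Iic s1, mu (Nat.pair s1 s') ∉ (Aset \ S) + (Aset \ S) := by
    rintro s' ⟨hs'S, hs'g⟩
    simp only [Set.mem_Iic, not_le] at hs'g
    have hv : valid (Nat.pair s1 s') := valid_pair hmemb1 (hS hs'S) hs'g
    intro hcon
    rw [Set.mem_add] at hcon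
    obtain ⟨x, hx, y, hy, hxy⟩ := hcon
    have hr := rigid hv hx.1 hy.1 hxy
    have hup : pa (Nat.pair s1 s') = s1 ∧ pb (Nat.pair s1 s') = s' := by
      unfold pa pb; rw [Nat.unpair_pair]; exact ⟨rfl, rfl⟩
    rcases hr with h | h | h | h
    · exact hx.2 (by rw [h, hup.1]; exact hs1)
    · exact hx.2 (by rw [h, hup.2]; exact hs'S)
    · exact hy.2 (by rw [h, hup.1]; exact hs1)
    · exact hy.2 (by rw [h, hup.2]; exact hs'S)
  have hinj : Set.InjOn (fun s' => mu (Nat.pair s1 s')) (S \ Set.Iic s1) := by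
    intro a ha b hb heq
    simp only [Set.mem_diff, Set.mem_Iic, not_le] at ha hb
    have hpf : ∀ c, s1 < c → Nat.pair s1 c = c * c + s1 := by
      intro c hc
      unfold Nat.pair
      rw [if_pos hc]
    by_contra hne
    rcases lt_trichotomy a b with hc | hc | hc
    · have : Nat.pair s1 a < Nat.pair s1 b := by
        rw [hpf a ha.2, hpf b hb.2]; nlinarith
      have := pow16_strict (a := Nat.pair s1 a + 1) (b := Nat.pair s1 b + 1) (by omega)
      simp only [mu] at heq
      omega
    · exact hne hc
    · have : Nat.pair s1 b < Nat.pair s1 a := by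
        rw [hpf a ha.2, hpf b hb.2]; nlinarith
      have := pow16_strict (a := Nat.pair s1 b + 1) (b := Nat.pair s1 a + 1) (by omega)
      simp only [mu] at heq
      omega
  have himg : ((fun s' => mu (Nat.pair s1 s')) '' (S \ Set.Iic s1)).Infinite :=
    Set.Infinite.image hinj hT
  apply Set.Infinite.mono _ himg
  rintro _ ⟨s', hs', rfl⟩
  exact key s' hs'

open Pointwise in
lemma finite_missing {S : Set ℕ} (hfin : S.Finite) :
    {n : ℕ | n ∉ (Aset \ S) + (Aset \ S)}.Finite := by
  classical
  obtain ⟨N, hN⟩ := cover hfin.toFinset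
  apply Set.Finite.subset (Set.finite_Iio N)
  intro n hn
  simp only [Set.mem_setOf_eq] at hn
  simp only [Set.mem_Iio]
  by_contra hcon
  push_neg at hcon
  obtain ⟨x, y, hx, hy, hxS, hyS, hxy⟩ := hN n hcon
  exact hn (Set.mem_add.mpr ⟨x, ⟨hx, fun h => hxS (hfin.mem_toFinset.mpr h)⟩,
    y, ⟨hy, fun h => hyS (hfin.mem_toFinset.mpr h)⟩, hxy⟩)

open Pointwise in
lemma main_iff : {n : ℕ | n ∉ Aset + Aset}.Finite ∧
    ∀ S ⊆ Aset, ({n : ℕ | n ∉ (Aset \ S) + (Aset \ S)}.Finite ↔ S.Finite) := by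
  constructor
  · have h := finite_missing (S := (∅ : Set ℕ)) (Set.finite_empty)
    simpa using h
  · intro S hSA
    constructor
    · intro hmiss
      by_contra hcon
      exact hmiss.not_infinite (fatal hSA hcon)
    · intro h
      exact finite_missing h



end EN

open Pointwise

/-- Erdős–Nathanson: there is an asymptotic basis `A` of order 2 such that `A \ S` is an
asymptotic basis of order 2 if and only if `S` is finite; in particular, there is an
asymptotic basis of order 2 containing no minimal asymptotic basis of order 2. -/
theorem stmt14 :
    (∃ A : Set ℕ, {n : ℕ | n ∉ A + A}.Finite ∧
      ∀ S ⊆ A, ({n : ℕ | n ∉ (A \ S) + (A \ S)}.Finite ↔ S.Finite)) ∧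
    (∃ A : Set ℕ, {n : ℕ | n ∉ A + A}.Finite ∧
      ∀ B ⊆ A, ¬ ({n : ℕ | n ∉ B + B}.Finite ∧
        ∀ b ∈ B, ¬ {n : ℕ | n ∉ (B \ {b}) + (B \ {b})}.Finite)) := by
  obtain ⟨hbasis, hiff⟩ := EN.main_iff
  constructor
  · exact ⟨EN.Aset, hbasis, hiff⟩
  · refine ⟨EN.Aset, hbasis, fun B hB => ?_⟩
    rintro ⟨hBfin, hmin⟩
    -- B is nonempty
    have hBne : B.Nonempty := by
      by_contra hcon
      push_neg at hcon
      rw [hcon] at hBfin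
      simp only [Set.empty_add] at hBfin
      have : {n : ℕ | n ∉ (∅ : Set ℕ)} = Set.univ := by
        ext n; simp
      rw [this] at hBfin
      exact Set.infinite_univ hBfin
    obtain ⟨b, hb⟩ := hBne
    -- A \ (A \ B) = B
    have hres : EN.Aset \ (EN.Aset \ B) = B := Set.diff_diff_cancel_left hB
    have hfin1 : (EN.Aset \ B).Finite := by
      have := (hiff (EN.Aset \ B) Set.diff_subset).mp
      rw [hres] at this
      exact this hBfin
    -- removing also b keeps a basis
    have hS2 : (EN.Aset \ B) ∪ {b} ⊆ EN.Aset := by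
      apply Set.union_subset Set.diff_subset
      simp only [Set.singleton_subset_iff]
      exact hB hb
    have hres2 : EN.Aset \ ((EN.Aset \ B) ∪ {b}) = B \ {b} := by
      rw [← Set.diff_diff, hres]
    have hfin2 : {n : ℕ | n ∉ (B \ {b}) + (B \ {b})}.Finite := by
      have := (hiff ((EN.Aset \ B) ∪ {b}) hS2).mpr (hfin1.union (Set.finite_singleton b))
      rwa [hres2] at this
    exact hmin b hb hfin2
end

section
/- Let A be a nonempty finite set of integers and let B be a set of integers such that every integer n has a unique representation n = a + b with a ∈ A and b ∈ B (that is, A ⊕ B = ℤ). Then B is periodic with some period m satisfying 1 ≤ m ≤ 2^{diam(A)}, where diam(A) = max(A) − min(A); that is, there exists a positive integer m ≤ 2^{diam(A)} such that for all b ∈ B, both b + m ∈ B and b − m ∈ B. -/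
/-- Newman: if `A` is a nonempty finite set of integers and `A ⊕ B = ℤ` (every integer
has a unique representation `a + b` with `a ∈ A`, `b ∈ B`), then `B` is periodic with
some period `m ≤ 2^{diam(A)}`. -/
theorem stmt18 (A : Finset ℤ) (hA : A.Nonempty) (B : Set ℤ)
    (hAB : ∀ n : ℤ, ∃! p : ℤ × ℤ, p.1 ∈ A ∧ p.2 ∈ B ∧ p.1 + p.2 = n) :
    ∃ m : ℕ, 1 ≤ m ∧ (m : ℤ) ≤ 2 ^ (A.max' hA - A.min' hA).toNat ∧
      ∀ b ∈ B, b + (m : ℤ) ∈ B ∧ b - (m : ℤ) ∈ B := by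
  classical
  set α := A.min' hA with hαdef
  set δ := A.max' hA with hδdef
  have hαA : α ∈ A := A.min'_mem hA
  have hδA : δ ∈ A := A.max'_mem hA
  have hαle : ∀ a ∈ A, α ≤ a := fun a ha => A.min'_le a ha
  have hleδ : ∀ a ∈ A, a ≤ δ := fun a ha => A.le_max' a ha
  have hαδ : α ≤ δ := hαle δ hδA
  set d : ℤ := δ - α with hd
  have hd0 : 0 ≤ d := by omega
  set dn : ℕ := (δ - α).toNat with hdn
  have hdnd : (dn : ℤ) = d := Int.toNat_of_nonneg hd0
  -- forward determinism rule
  have fwd : ∀ n : ℤ, (n - α ∈ B ↔ ∀ a ∈ A, a ≠ α → n - a ∉ B) := by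
    intro n
    obtain ⟨p, ⟨hp1, hp2, hp3⟩, hpu⟩ := hAB n
    constructor
    · intro hnB a ha hne hcon
      have h1 := hpu (α, n - α) ⟨hαA, hnB, by ring⟩
      have h2 := hpu (a, n - a) ⟨ha, hcon, by ring⟩
      rw [← h2] at h1
      exact hne (congrArg Prod.fst h1).symm
    · intro h
      have hp1α : p.1 = α := by
        by_contra hne
        refine h p.1 hp1 hne ?_
        have : n - p.1 = p.2 := by omega
        rw [this]; exact hp2
      have : n - α = p.2 := by omega
      rw [this]; exact hp2
  -- backward determinism rule
  have bwd : ∀ n : ℤ, (n - δ ∈ B ↔ ∀ a ∈ A, a ≠ δ → n - a ∉ B) := by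
    intro n
    obtain ⟨p, ⟨hp1, hp2, hp3⟩, hpu⟩ := hAB n
    constructor
    · intro hnB a ha hne hcon
      have h1 := hpu (δ, n - δ) ⟨hδA, hnB, by ring⟩
      have h2 := hpu (a, n - a) ⟨ha, hcon, by ring⟩
      rw [← h2] at h1
      exact hne (congrArg Prod.fst h1).symm
    · intro h
      have hp1δ : p.1 = δ := by
        by_contra hne
        refine h p.1 hp1 hne ?_
        have : n - p.1 = p.2 := by omega
        rw [this]; exact hp2
      have : n - δ = p.2 := by omega
      rw [this]; exact hp2
  -- pigeonhole: two equal windows among positions 0..2^dn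
  obtain ⟨i, j, hij, hfij⟩ :
      ∃ i j : Fin (2 ^ dn + 1), i ≠ j ∧
        (fun t : Fin dn => decide (((i : ℕ) : ℤ) + (t : ℕ) ∈ B)) =
        (fun t : Fin dn => decide (((j : ℕ) : ℤ) + (t : ℕ) ∈ B)) := by
    apply Fintype.exists_ne_map_eq_of_card_lt
      (fun i : Fin (2 ^ dn + 1) => fun t : Fin dn => decide (((i : ℕ) : ℤ) + (t : ℕ) ∈ B))
    simp [Fintype.card_fun]
  -- WLOG i < j; extract m and window equality at base point
  obtain ⟨i0, m, hm1, hmle, hwin⟩ :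
      ∃ (i0 : ℤ) (m : ℕ), 1 ≤ m ∧ m ≤ 2 ^ dn ∧
        ∀ t : ℤ, i0 ≤ t → t < i0 + d → (t ∈ B ↔ t + (m : ℤ) ∈ B) := by
    have key : ∀ i j : Fin (2 ^ dn + 1), (i : ℕ) < (j : ℕ) →
        ((fun t : Fin dn => decide (((i : ℕ) : ℤ) + (t : ℕ) ∈ B)) =
         (fun t : Fin dn => decide (((j : ℕ) : ℤ) + (t : ℕ) ∈ B))) →
        ∃ (i0 : ℤ) (m : ℕ), 1 ≤ m ∧ m ≤ 2 ^ dn ∧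
        ∀ t : ℤ, i0 ≤ t → t < i0 + d → (t ∈ B ↔ t + (m : ℤ) ∈ B) := by
      intro i j hlt heq
      refine ⟨(i : ℕ), (j : ℕ) - (i : ℕ), by omega, by have := j.isLt; omega, ?_⟩
      intro t ht1 ht2
      have htn : (t - (i : ℕ)).toNat < dn := by omega
      have := congrFun heq ⟨(t - (i : ℕ)).toNat, htn⟩
      simp only [decide_eq_decide] at this
      have e1 : ((i : ℕ) : ℤ) + (((t - (i : ℕ)).toNat : ℕ) : ℤ) = t := by
        omega
      have e2 : ((j : ℕ) : ℤ) + (((t - (i : ℕ)).toNat : ℕ) : ℤ) = t + (((j : ℕ) - (i : ℕ) : ℕ) : ℤ) := by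
        push_cast [Nat.cast_sub (le_of_lt hlt)]; omega
      rw [e1, e2] at this
      exact this
    rcases lt_or_gt_of_ne (fun h : (i : ℕ) = (j : ℕ) => hij (Fin.ext h)) with h | h
    · exact key i j h hfij
    · exact key j i h hfij.symm
  -- window equality propagates to all positions
  set P : ℤ → Prop := fun n => ∀ t : ℤ, n ≤ t → t < n + d → (t ∈ B ↔ t + (m : ℤ) ∈ B) with hP
  have fwdStep : ∀ n : ℤ, P n → (n + d ∈ B ↔ n + d + (m : ℤ) ∈ B) := by
    intro n hPn
    have h1 := fwd (n + d + α)
    have h2 := fwd (n + d + (m : ℤ) + α)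
    have e1 : n + d + α - α = n + d := by ring
    have e2 : n + d + (m : ℤ) + α - α = n + d + (m : ℤ) := by ring
    rw [e1] at h1; rw [e2] at h2
    rw [h1, h2]
    constructor
    · intro h a ha hne
      have hαa : α < a := lt_of_le_of_ne (hαle a ha) (Ne.symm hne)
      have haδ : a ≤ δ := hleδ a ha
      have e3 : n + d + (m : ℤ) + α - a = (n + d + α - a) + (m : ℤ) := by ring
      rw [e3, ← hPn (n + d + α - a) (by omega) (by omega)]
      exact h a ha hne
    · intro h a ha hne
      have hαa : α < a := lt_of_le_of_ne (hαle a ha) (Ne.symm hne)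
      have haδ : a ≤ δ := hleδ a ha
      have e3 : n + d + (m : ℤ) + α - a = (n + d + α - a) + (m : ℤ) := by ring
      rw [hPn (n + d + α - a) (by omega) (by omega), ← e3]
      exact h a ha hne
  have bwdStep : ∀ n : ℤ, P n → (n - 1 ∈ B ↔ n - 1 + (m : ℤ) ∈ B) := by
    intro n hPn
    have h1 := bwd (n - 1 + δ)
    have h2 := bwd (n - 1 + (m : ℤ) + δ)
    have e1 : n - 1 + δ - δ = n - 1 := by ring
    have e2 : n - 1 + (m : ℤ) + δ - δ = n - 1 + (m : ℤ) := by ring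
    rw [e1] at h1; rw [e2] at h2
    rw [h1, h2]
    constructor
    · intro h a ha hne
      have haδ : a < δ := lt_of_le_of_ne (hleδ a ha) hne
      have hαa : α ≤ a := hαle a ha
      have e3 : n - 1 + (m : ℤ) + δ - a = (n - 1 + δ - a) + (m : ℤ) := by ring
      rw [e3, ← hPn (n - 1 + δ - a) (by omega) (by omega)]
      exact h a ha hne
    · intro h a ha hne
      have haδ : a < δ := lt_of_le_of_ne (hleδ a ha) hne
      have hαa : α ≤ a := hαle a ha
      have e3 : n - 1 + (m : ℤ) + δ - a = (n - 1 + δ - a) + (m : ℤ) := by ring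
      rw [hPn (n - 1 + δ - a) (by omega) (by omega), ← e3]
      exact h a ha hne
  have Pall : ∀ n : ℤ, P n := by
    intro n
    refine Int.inductionOn' n i0 hwin ?_ ?_
    · intro k _ hk t ht1 ht2
      rcases lt_or_ge t (k + d) with h | h
      · exact hk t (by omega) h
      · have : t = k + d := by omega
        subst this
        exact fwdStep k hk
    · intro k _ hk t ht1 ht2
      rcases le_or_gt k t with h | h
      · exact hk t h (by omega)
      · have : t = k - 1 := by omega
        subst this
        exact bwdStep k hk
  have Q : ∀ k : ℤ, k ∈ B ↔ k + (m : ℤ) ∈ B := by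
    intro k
    have := fwdStep (k - d) (Pall (k - d))
    simpa using this
  refine ⟨m, hm1, by exact_mod_cast hmle, ?_⟩
  intro b hb
  refine ⟨(Q b).mp hb, ?_⟩
  have := (Q (b - (m : ℤ))).mpr (by simpa using hb)
  exact this
end

section
/- Let Γ be a finite group of order n with identity element e, let X be a subset of Γ, and let k be a positive integer such that k·|X| ≥ n. Then there exist an integer r with 1 ≤ r ≤ k and elements x₁, …, x_r ∈ X such that x₁x₂⋯x_r = e. (This is the Caccetta–Häggkvist conjecture for Cayley graphs: in the Cayley graph on vertex set Γ with edges (γ, γx) for γ ∈ Γ and x ∈ X, if every vertex has outdegree at least n/k, then there is a directed circuit of length at most k.) -/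
set_option maxHeartbeats 2000000

open Finset
open scoped Pointwise

section KS

variable {α : Type*} [Group α] [Fintype α] [DecidableEq α]

/-- Lexicographic-style arithmetic helper for the measure used in the
Kemperman–Scherk induction. -/
private lemma lex3 {K a a' b b' c c' : ℕ} (hb : b' < K) (hc : c' < K)
    (h : a' < a ∨ (a' = a ∧ (b' < b ∨ (b' = b ∧ c' < c)))) :
    (a' * K + b') * K + c' < (a * K + b) * K + c := by
  have key : ∀ {x y : ℕ}, x + 1 ≤ y → (x * K + c' < y * K) := by
    intro x y hxy
    calc x * K + c' < x * K + K := by omega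
    _ = (x + 1) * K := by ring
    _ ≤ y * K := Nat.mul_le_mul_right _ hxy
  rcases h with h1 | ⟨rfl, h2⟩
  · have h1' : a' * K + b' + 1 ≤ a * K + b := by
      have : (a' + 1) * K ≤ a * K := Nat.mul_le_mul_right _ (by omega)
      have : a' * K + K ≤ a * K := by nlinarith
      omega
    have := key h1'
    omega
  rcases h2 with h2 | ⟨rfl, h3⟩
  · have h2' : a' * K + b' + 1 ≤ a' * K + b := by omega
    have := key h2'
    omega
  · omega

/-- The measure for the induction: base-`K` encoding of the lexicographic triple
`(|s*t|, 2|s*t| - (|s|+|t|), |s|)`. -/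
private def ksMu (s t : Finset α) : ℕ :=
  ((s * t).card * (2 * Fintype.card α + 2) + (2 * (s * t).card - (s.card + t.card))) *
    (2 * Fintype.card α + 2) + s.card

/-- **Kemperman–Scherk**: if `1 ∈ s`, `1 ∈ t` and `1` has a unique representation as a
product `a * b` with `a ∈ s`, `b ∈ t`, then `|s| + |t| ≤ |s * t| + 1`. -/
private lemma ks_aux : ∀ n : ℕ, ∀ s t : Finset α, ksMu s t ≤ n →
    (1 : α) ∈ s → (1 : α) ∈ t →
    (∀ a ∈ s, ∀ b ∈ t, a * b = 1 → a = 1 ∧ b = 1) →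
    s.card + t.card ≤ (s * t).card + 1 := by
  intro n
  induction n with
  | zero =>
    intro s t hmu h1s h1t _
    exfalso
    have : s.card ≠ 0 := by
      intro h
      rw [Finset.card_eq_zero] at h
      simp [h] at h1s
    unfold ksMu at hmu
    omega
  | succ n ih =>
    intro s t hmu h1s h1t hU
    set K := 2 * Fintype.card α + 2 with hK
    by_cases hst : s ∩ t ⊆ {1}
    · -- base case : `s ∩ t = {1}`, so `s ∪ t ⊆ s * t` has at least `|s|+|t|-1` elements
      have hsub : s ∪ t ⊆ s * t := by
        intro x hx
        rcases Finset.mem_union.1 hx with hx | hx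
        · have := Finset.mul_mem_mul hx h1t
          simpa using this
        · have := Finset.mul_mem_mul h1s hx
          simpa using this
      have h1 : (s ∪ t).card + (s ∩ t).card = s.card + t.card :=
        Finset.card_union_add_card_inter s t
      have h2 : (s ∪ t).card ≤ (s * t).card := Finset.card_le_card hsub
      have h3 : (s ∩ t).card ≤ 1 := by
        have := Finset.card_le_card hst
        simpa using this
      omega
    · -- pick `w ∈ s ∩ t`, `w ≠ 1`
      obtain ⟨w, hwmem, hw1⟩ : ∃ w, w ∈ s ∩ t ∧ w ≠ 1 := by
        rcases Finset.not_subset.1 hst with ⟨w, hw, hw1⟩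
        exact ⟨w, hw, by simpa using hw1⟩
      have hws : w ∈ s := (Finset.mem_inter.1 hwmem).1
      have hwt : w ∈ t := (Finset.mem_inter.1 hwmem).2
      have hwinv_s : w⁻¹ ∉ s := by
        intro h
        exact hw1 ((hU w⁻¹ h w hwt (inv_mul_cancel w)).2)
      have hwinv_t : w⁻¹ ∉ t := by
        intro h
        exact hw1 ((hU w hws w⁻¹ h (mul_inv_cancel w)).1)
      -- the four transformed sets
      set s₁ : Finset α := s ∩ (s * {w⁻¹}) with hs₁
      set t₁ : Finset α := t ∪ ({w} * t) with ht₁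
      set s₂ : Finset α := s ∪ (s * {w⁻¹}) with hs₂
      set t₂ : Finset α := t ∩ ({w} * t) with ht₂
      have hmem_sw : ∀ x : α, x ∈ s * {w⁻¹} ↔ x * w ∈ s := by
        intro x
        simp only [Finset.mem_mul, Finset.mem_singleton]
        constructor
        · rintro ⟨y, hy, z, rfl, rfl⟩
          simpa using hy
        · intro h
          exact ⟨x * w, h, w⁻¹, rfl, by group⟩
      have hmem_wt : ∀ y : α, y ∈ {w} * t ↔ w⁻¹ * y ∈ t := by
        intro y
        simp only [Finset.mem_mul, Finset.mem_singleton]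
        constructor
        · rintro ⟨z, rfl, u, hu, rfl⟩
          simpa using hu
        · intro h
          exact ⟨w, rfl, w⁻¹ * y, h, by group⟩
      have h1s₁ : (1 : α) ∈ s₁ := by
        rw [hs₁, Finset.mem_inter, hmem_sw]
        simpa using ⟨h1s, hws⟩
      have hwt₂ : w ∈ t₂ := by
        rw [ht₂, Finset.mem_inter, hmem_wt]
        simpa using ⟨hwt, h1t⟩
      have hwinvs₂ : w⁻¹ ∈ s₂ := by
        rw [hs₂, Finset.mem_union, hmem_sw]
        right
        simpa using h1s
      -- product subsets
      have hsub1 : s₁ * t₁ ⊆ s * t := by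
        intro x hx
        rw [Finset.mem_mul] at hx
        obtain ⟨a, ha, b, hb, rfl⟩ := hx
        have ha' : a ∈ s := (Finset.mem_inter.1 ha).1
        rcases Finset.mem_union.1 hb with hb | hb
        · exact Finset.mul_mem_mul ha' hb
        · have haw : a * w ∈ s := (hmem_sw a).1 (Finset.mem_inter.1 ha).2
          have hbw : w⁻¹ * b ∈ t := (hmem_wt b).1 hb
          have : (a * w) * (w⁻¹ * b) = a * b := by group
          rw [← this]
          exact Finset.mul_mem_mul haw hbw
      have hsub2 : s₂ * t₂ ⊆ s * t := by
        intro x hx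
        rw [Finset.mem_mul] at hx
        obtain ⟨a, ha, b, hb, rfl⟩ := hx
        have hb' : b ∈ t := (Finset.mem_inter.1 hb).1
        rcases Finset.mem_union.1 ha with ha | ha
        · exact Finset.mul_mem_mul ha hb'
        · have haw : a * w ∈ s := (hmem_sw a).1 ha
          have hbw : w⁻¹ * b ∈ t := (hmem_wt b).1 (Finset.mem_inter.1 hb).2
          have : (a * w) * (w⁻¹ * b) = a * b := by group
          rw [← this]
          exact Finset.mul_mem_mul haw hbw
      -- cardinality identities
      have hcs : s₁.card + s₂.card = 2 * s.card := by
        have h1 : s₁.card + s₂.card = s.card + (s * {w⁻¹}).card := by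
          rw [hs₁, hs₂, add_comm]
          exact Finset.card_union_add_card_inter s (s * {w⁻¹})
        rw [h1, Finset.card_mul_singleton]
        ring
      have hct : t₁.card + t₂.card = 2 * t.card := by
        have h1 : t₁.card + t₂.card = t.card + ({w} * t).card := by
          rw [ht₁, ht₂]
          exact Finset.card_union_add_card_inter t ({w} * t)
        rw [h1, Finset.card_singleton_mul]
        ring
      have hs₁lt : s₁.card < s.card := by
        have hle : s₁ ⊆ s := Finset.inter_subset_left
        rcases lt_or_eq_of_le (Finset.card_le_card hle) with h | h
        · exact h
        · exfalso
          have heq : s₁ = s := Finset.eq_of_subset_of_card_le hle (le_of_eq h.symm)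
          have hsub' : s ⊆ s * {w⁻¹} := by
            intro x hx
            have hx1 : x ∈ s₁ := heq.symm ▸ hx
            exact (Finset.mem_inter.1 hx1).2
          have heq2 : s = s * {w⁻¹} :=
            Finset.eq_of_subset_of_card_le hsub' (le_of_eq (Finset.card_mul_singleton s w⁻¹))
          have hmm : w⁻¹ ∈ s * {w⁻¹} := by
            rw [hmem_sw]
            simpa using h1s
          rw [← heq2] at hmm
          exact hwinv_s hmm
      -- bounds used for the measure
      have hcard_le : ∀ u : Finset α, u.card ≤ Fintype.card α := fun u => Finset.card_le_card (Finset.subset_univ u)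
      have hc1le : (s₁ * t₁).card ≤ (s * t).card := Finset.card_le_card hsub1
      have hc2le : (s₂ * t₂).card ≤ (s * t).card := Finset.card_le_card hsub2
      rcases le_or_gt (s.card + t.card) (s₁.card + t₁.card) with hb1 | hb2
      · -- branch 1: recurse on (s₁, t₁) with anchor (1,1)
        have h1t₁ : (1 : α) ∈ t₁ := Finset.mem_union.2 (Or.inl h1t)
        have hU1 : ∀ a ∈ s₁, ∀ b ∈ t₁, a * b = 1 → a = 1 ∧ b = 1 := by
          intro a ha b hb hab
          rcases Finset.mem_union.1 hb with hb | hb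
          · exact hU a (Finset.mem_inter.1 ha).1 b hb hab
          · exfalso
            have haw : a * w ∈ s := (hmem_sw a).1 (Finset.mem_inter.1 ha).2
            have hbw : w⁻¹ * b ∈ t := (hmem_wt b).1 hb
            have hprod : (a * w) * (w⁻¹ * b) = 1 := by
              rw [show (a * w) * (w⁻¹ * b) = a * b by group, hab]
            obtain ⟨h1, h2⟩ := hU _ haw _ hbw hprod
            have ha' : a = w⁻¹ := eq_inv_of_mul_eq_one_left h1
            rw [ha'] at ha
            exact hwinv_s (Finset.mem_inter.1 ha).1
        -- measure decreases
        have hmu1 : ksMu s₁ t₁ < ksMu s t := by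
          unfold ksMu
          rw [← hK]
          apply lex3
          · have := hc1le
            have := hcard_le (s * t)
            omega
          · have := hcard_le s₁
            omega
          · rcases lt_or_eq_of_le hc1le with h | h
            · exact Or.inl h
            · refine Or.inr ⟨h, ?_⟩
              have hd : 2 * (s₁ * t₁).card - (s₁.card + t₁.card) ≤
                  2 * (s * t).card - (s.card + t.card) := by omega
              rcases lt_or_eq_of_le hd with h2 | h2
              · exact Or.inl h2
              · exact Or.inr ⟨h2, hs₁lt⟩
        have hrec := ih s₁ t₁ (by omega) h1s₁ h1t₁ hU1
        omega
      · -- branch 2: recurse on the conjugated-normalised pair ({w} * s₂, t₂ * {w⁻¹})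
        have hsum2 : s.card + t.card < s₂.card + t₂.card := by omega
        set sh : Finset α := {w} * s₂ with hsh
        set th : Finset α := t₂ * {w⁻¹} with hth
        have hmem_sh : ∀ x : α, x ∈ sh ↔ w⁻¹ * x ∈ s₂ := by
          intro x
          rw [hsh]
          simp only [Finset.mem_mul, Finset.mem_singleton]
          constructor
          · rintro ⟨z, rfl, u, hu, rfl⟩
            simpa using hu
          · intro h
            exact ⟨w, rfl, w⁻¹ * x, h, by group⟩
        have hmem_th : ∀ y : α, y ∈ th ↔ y * w ∈ t₂ := by
          intro y
          rw [hth]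
          simp only [Finset.mem_mul, Finset.mem_singleton]
          constructor
          · rintro ⟨z, hz, u, rfl, rfl⟩
            simpa using hz
          · intro h
            exact ⟨y * w, h, w⁻¹, rfl, by group⟩
        have h1sh : (1 : α) ∈ sh := by
          rw [hmem_sh]
          simpa using hwinvs₂
        have h1th : (1 : α) ∈ th := by
          rw [hmem_th]
          simpa using hwt₂
        -- unique representation for the new pair
        have hU2 : ∀ a ∈ sh, ∀ b ∈ th, a * b = 1 → a = 1 ∧ b = 1 := by
          intro a ha b hb hab
          have hx : w⁻¹ * a ∈ s₂ := (hmem_sh a).1 ha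
          have hy : b * w ∈ t₂ := (hmem_th b).1 hb
          have hyt : b * w ∈ t := (Finset.mem_inter.1 hy).1
          have hyw : w⁻¹ * (b * w) ∈ t := (hmem_wt (b * w)).1 (Finset.mem_inter.1 hy).2
          have hprod : (w⁻¹ * a) * (b * w) = 1 := by
            rw [show (w⁻¹ * a) * (b * w) = w⁻¹ * (a * b) * w by group, hab]
            group
          rcases Finset.mem_union.1 hx with hxs | hxs
          · exfalso
            obtain ⟨h1, h2⟩ := hU _ hxs _ hyt hprod
            -- then b * w = 1, so w⁻¹ = b * w * w⁻¹ ... gives 1 ∈ {w}*t i.e. w⁻¹ ∈ t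
            have : (1 : α) ∈ {w} * t := by
              have := (Finset.mem_inter.1 hy).2
              rwa [h2] at this
            rw [hmem_wt] at this
            simp only [mul_one] at this
            exact hwinv_t this
          · have hxw : (w⁻¹ * a) * w ∈ s := (hmem_sw _).1 hxs
            have hprod2 : ((w⁻¹ * a) * w) * (w⁻¹ * (b * w)) = 1 := by
              rw [show ((w⁻¹ * a) * w) * (w⁻¹ * (b * w)) = (w⁻¹ * a) * (b * w) by group, hprod]
            obtain ⟨h1, h2⟩ := hU _ hxw _ hyw hprod2
            have hxa : w⁻¹ * a = w⁻¹ := eq_inv_of_mul_eq_one_left h1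
            have ha1 : a = 1 := by
              have hh : w⁻¹ * a = w⁻¹ * 1 := by rw [mul_one]; exact hxa
              exact mul_left_cancel hh
            have hyb : b * w = w := by
              have h2' := eq_inv_of_mul_eq_one_right h2
              rwa [inv_inv] at h2'
            have hb1 : b = 1 := by
              have hh : b * w = 1 * w := by rw [one_mul]; exact hyb
              exact mul_right_cancel hh
            exact ⟨ha1, hb1⟩
        -- cardinalities transfer
        have hcsh : sh.card = s₂.card := by rw [hsh]; exact Finset.card_singleton_mul w s₂
        have hcth : th.card = t₂.card := by rw [hth]; exact Finset.card_mul_singleton t₂ w⁻¹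
        have hprodeq : (sh * th).card = (s₂ * t₂).card := by
          have h1 : sh * th = {w} * (s₂ * t₂) * {w⁻¹} := by
            rw [hsh, hth, mul_assoc, mul_assoc, mul_assoc]
          rw [h1, Finset.card_mul_singleton, Finset.card_singleton_mul]
        -- sum bound needed for the ℕ-subtraction comparison
        have hshne : sh.Nonempty := ⟨1, h1sh⟩
        have hthne : th.Nonempty := ⟨1, h1th⟩
        have hsumb : sh.card + th.card ≤ 2 * (sh * th).card := by
          have h1 : sh.card ≤ (sh * th).card := Finset.card_le_card_mul_right hthne
          have h2 : th.card ≤ (sh * th).card := Finset.card_le_card_mul_left hshne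
          omega
        have hmu2 : ksMu sh th < ksMu s t := by
          unfold ksMu
          rw [← hK]
          apply lex3
          · have := hcard_le (sh * th)
            omega
          · have := hcard_le sh
            omega
          · rw [hprodeq, hcsh, hcth]
            rcases lt_or_eq_of_le hc2le with h | h
            · exact Or.inl h
            · refine Or.inr ⟨h, Or.inl ?_⟩
              rw [hprodeq, hcsh, hcth] at hsumb
              omega
        have hrec := ih sh th (by omega) h1sh h1th hU2
        rw [hprodeq, hcsh, hcth] at hrec
        omega

/-- Kemperman–Scherk for finite groups, packaged. -/
private lemma ks {s t : Finset α} (h1s : (1 : α) ∈ s) (h1t : (1 : α) ∈ t)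
    (hU : ∀ a ∈ s, ∀ b ∈ t, a * b = 1 → a = 1 ∧ b = 1) :
    s.card + t.card ≤ (s * t).card + 1 :=
  ks_aux (ksMu s t) s t le_rfl h1s h1t hU

end KS

/-- Hamidoune's theorem (the Caccetta–Häggkvist conjecture for Cayley graphs): if `Γ` is
a finite group of order `n`, `X ⊆ Γ`, and `k` is a positive integer with `k·|X| ≥ n`,
then some nonempty product of at most `k` elements of `X` equals the identity;
equivalently, the Cayley graph of `(Γ, X)` has a directed circuit of length at most `k`. -/
theorem stmt19 (Γ : Type*) [Group Γ] [Fintype Γ] (X : Finset Γ) (k : ℕ) (hk : 0 < k)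
    (hX : Fintype.card Γ ≤ k * X.card) :
    ∃ l : List Γ, l ≠ [] ∧ l.length ≤ k ∧ (∀ x ∈ l, x ∈ X) ∧ l.prod = 1 := by
  classical
  by_contra hcon
  push_neg at hcon
  -- `1 ∉ X`
  have h1X : (1 : Γ) ∉ X := by
    intro h
    exact hcon [1] (by simp) (by simp; omega) (by simpa using h) (by simp)
  set B : Finset Γ := insert 1 X with hB
  have h1B : (1 : Γ) ∈ B := Finset.mem_insert_self 1 X
  have hBcard : B.card = X.card + 1 := Finset.card_insert_of_notMem h1X
  -- membership in `B^i` means: identity or a product of at most `i` elements of `X`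
  have hrep : ∀ i : ℕ, ∀ x ∈ B ^ i, x = 1 ∨
      ∃ l : List Γ, l ≠ [] ∧ l.length ≤ i ∧ (∀ y ∈ l, y ∈ X) ∧ l.prod = x := by
    intro i
    induction i with
    | zero =>
      intro x hx
      left
      rwa [pow_zero, Finset.mem_one] at hx
    | succ i ihh =>
      intro x hx
      rw [pow_succ, Finset.mem_mul] at hx
      obtain ⟨u, hu, v, hv, rfl⟩ := hx
      rcases Finset.mem_insert.1 hv with rfl | hvX
      · rcases ihh u hu with h | ⟨l, hl1, hl2, hl3, hl4⟩
        · left; rw [h, mul_one]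
        · right; exact ⟨l, hl1, le_trans hl2 (Nat.le_succ i), hl3, by rw [hl4, mul_one]⟩
      · rcases ihh u hu with h | ⟨l, hl1, hl2, hl3, hl4⟩
        · right
          refine ⟨[v], by simp, by simp, by simpa using hvX, by simp [h]⟩
        · right
          refine ⟨l ++ [v], by simp, by simp [Nat.succ_le_succ hl2], ?_, by simp [hl4]⟩
          intro y hy
          rcases List.mem_append.1 hy with hy | hy
          · exact hl3 y hy
          · simp only [List.mem_singleton] at hy
            rw [hy]
            exact hvX
  -- `1 ∈ B^i`
  have hone : ∀ i : ℕ, (1 : Γ) ∈ B ^ i := by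
    intro i
    induction i with
    | zero => rw [pow_zero]; exact Finset.one_mem_one
    | succ i ihh => rw [pow_succ]; simpa using Finset.mul_mem_mul ihh h1B
  -- unique representation of 1 in `B^i * B` for `i + 1 ≤ k`
  have hUniq : ∀ i : ℕ, i + 1 ≤ k →
      ∀ a ∈ B ^ i, ∀ b ∈ B, a * b = 1 → a = 1 ∧ b = 1 := by
    intro i hik a ha b hb hab
    rcases Finset.mem_insert.1 hb with rfl | hbX
    · rw [mul_one] at hab
      exact ⟨hab, rfl⟩
    · exfalso
      rcases hrep i a ha with rfl | ⟨l, hl1, hl2, hl3, hl4⟩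
      · rw [one_mul] at hab
        rw [hab] at hbX
        exact h1X hbX
      · refine hcon (l ++ [b]) (by simp) ?_ ?_ ?_
        · simpa using Nat.le_trans (Nat.succ_le_succ hl2) hik
        · intro y hy
          rcases List.mem_append.1 hy with hy | hy
          · exact hl3 y hy
          · simp at hy; rwa [hy]
        · rw [List.prod_append]
          simpa [hl4] using hab
  -- growth of the balls
  have hgrow : ∀ i : ℕ, i ≤ k → i * X.card + 1 ≤ (B ^ i).card := by
    intro i
    induction i with
    | zero => intro _; simp
    | succ i ihh =>
      intro hik
      have h1 : i * X.card + 1 ≤ (B ^ i).card := ihh (Nat.le_of_succ_le hik)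
      have hks := ks (hone i) h1B (hUniq i hik)
      rw [← pow_succ] at hks
      have := hBcard
      calc (i + 1) * X.card + 1 = (i * X.card + 1) + X.card := by ring
      _ ≤ (B ^ i).card + X.card := by omega
      _ = (B ^ i).card + B.card - 1 := by omega
      _ ≤ (B ^ (i + 1)).card := by omega
  -- conclusion
  have hfin : (B ^ k).card ≤ Fintype.card Γ := Finset.card_le_univ _
  have := hgrow k le_rfl
  omega
end
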